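/- Suppose N ≥ 2 and all weights equal 1, and fix j ∈ {0,…,m−1}. Assume the fixed-point attempt probability τ(j;p_0) lies in (0,1) for all p_0 ∈ [0,1]. Then the RandomReset throughput S̃(j, p_0) := S(τ(j;p_0), 1) is strictly quasi-concave in p_0 on [0,1]: there exists p_0* ∈ [0,1] such that S̃(j, ·) is strictly increasing on [0, p_0*] and strictly decreasing on [p_0*, 1]. -/

import Mathlib

open Finset

/-- `α_j(c) = (1-c) ∑_{i=j}^m 2^i c^{i-j} + 2^m c^{m-j}`. -/
noncomputable def alphaB (m j : ℕ) (c : ℝ) : ℝ :=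
  (1 - c) * ∑ i ∈ Finset.Icc j m, (2 : ℝ) ^ i * c ^ (i - j) + (2 : ℝ) ^ m * c ^ (m - j)

/-- `κ_0 = 2 / CW_min`. -/
noncomputable def kappa0 (CWmin : ℕ) : ℝ := 2 / (CWmin : ℝ)

/-- A reset distribution `q = (q_0, …, q_m)`. -/
def IsResetDist (m : ℕ) (q : Fin (m + 1) → ℝ) : Prop :=
  (∀ j, 0 ≤ q j) ∧ (∑ j, q j) = 1

/-- Conditional attempt probability `τ̂_c(q) = κ_0 / ∑_j q_j α_j(c)`. -/
noncomputable def tauHatC (m CWmin : ℕ) (q : Fin (m + 1) → ℝ) (c : ℝ) : ℝ :=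
  kappa0 CWmin / ∑ j : Fin (m + 1), q j * alphaB m (j : ℕ) c

/-- RandomReset(j; p₀) conditional attempt probability
`τ_c(j;p₀) = κ_0 / (p₀ α_j(c) + ((1-p₀)/(m-j)) ∑_{i=j+1}^m α_i(c))`. -/
noncomputable def tauRRC (m CWmin : ℕ) (j : ℕ) (p0 c : ℝ) : ℝ :=
  kappa0 CWmin /
    (p0 * alphaB m j c + ((1 - p0) / ((m : ℝ) - (j : ℝ))) * ∑ i ∈ Finset.Icc (j + 1) m, alphaB m i c)

/-- `τ ∈ [0,1]` is the fixed-point attempt probability `τ̂(q)` of the reset distribution `q`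
for `N` nodes: `τ = τ̂_{1-(1-τ)^(N-1)}(q)`. -/
def IsFixedPointQ (m CWmin N : ℕ) (q : Fin (m + 1) → ℝ) (τ : ℝ) : Prop :=
  τ ∈ Set.Icc (0 : ℝ) 1 ∧ τ = tauHatC m CWmin q (1 - (1 - τ) ^ (N - 1))

/-- `τ ∈ [0,1]` is the fixed-point attempt probability `τ(j;p₀)` of the RandomReset(j;p₀)
policy for `N` nodes: `τ = τ_{1-(1-τ)^(N-1)}(j;p₀)`. -/
def IsFixedPointRR (m CWmin N : ℕ) (j : ℕ) (p0 τ : ℝ) : Prop :=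
  τ ∈ Set.Icc (0 : ℝ) 1 ∧ τ = tauRRC m CWmin j p0 (1 - (1 - τ) ^ (N - 1))

/-- System throughput with unit weights: `S(p, 1)` with `P_I = (1-p)^N`, `P_T = N p/(1-p)`. -/
noncomputable def Ssys1 (N : ℕ) (EP σ Ts Tc p : ℝ) : ℝ :=
  EP * ((N : ℝ) * p / (1 - p)) * (1 - p) ^ N /
    ((1 - p) ^ N * σ + ((N : ℝ) * p / (1 - p)) * (1 - p) ^ N * (Ts - Tc)
      + (1 - (1 - p) ^ N) * Tc)

/-!
At the fixed point, `τ · D(p₀, c(τ)) = κ₀`, where `c(τ) = 1 - (1 - τ)^(N-1)` and `D` is the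
denominator of `τ_c(j;p₀)`. The left side is strictly increasing in `τ`, because every `α_i`
satisfies `α_i + α_i' ≥ 0` on `[0,1]` while `τ c'(τ) < 1`, and strictly decreasing in `p₀`,
because `α_j` lies below the mean of `α_{j+1}, …, α_m`. Hence `τ(j;·)` is continuous and
strictly increasing. With `u = 1/(1 - τ)` the throughput is `E_P / (T_s - T_c + g(u))` for
`g(u) = (T_c/N) ∑_{i<N} u^i + (σ/N)/(u - 1)`, which is strictly convex on `(1, ∞)`. So
`g(u(τ(j;p₀)))` is strictly quasiconvex in `p₀`: it decreases strictly up to its minimiser and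
increases strictly after it, and the throughput does the opposite.
-/

lemma StrictConvexOn.const_mul {s : Set ℝ} {f : ℝ → ℝ} (hf : StrictConvexOn ℝ s f) {c : ℝ}
    (hc : 0 < c) : StrictConvexOn ℝ s fun x => c * f x :=
  ⟨hf.1, fun x hx y hy hxy a b ha hb hab => by
    simpa only [smul_eq_mul, mul_add, mul_left_comm c] using
      mul_lt_mul_of_pos_left (hf.2 hx hy hxy ha hb hab) hc⟩

lemma strictConvexOn_inv_sub_one : StrictConvexOn ℝ (Set.Ioi 1) fun u : ℝ => (u - 1)⁻¹ := by
  have h := (strictConvexOn_zpow (m := -1) (by norm_num) (by norm_num)).translate_left (-1)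
  have hs : (fun z : ℝ => -1 + z) ⁻¹' Set.Ioi 0 = Set.Ioi 1 := by
    ext u
    simp
  rw [hs] at h
  exact h.congr fun u _ => by simp [sub_eq_add_neg]

lemma convexOn_sum_range_pow (N : ℕ) :
    ConvexOn ℝ (Set.Ici 0) fun u : ℝ => ∑ i ∈ Finset.range N, u ^ i := by
  rw [← Finset.sum_fn]
  exact Finset.sum_induction _ (ConvexOn ℝ (Set.Ici 0)) (fun _ _ => ConvexOn.add)
    (convexOn_const 0 (convex_Ici 0)) fun i _ => convexOn_pow i

lemma StrictConvexOn.lt_max_of_strictMonoOn {α : Type*} [Preorder α] {f : ℝ → ℝ} {t : Set ℝ}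
    (hf : StrictConvexOn ℝ t f) {U : α → ℝ} {s : Set α} (hU : StrictMonoOn U s)
    (hUt : Set.MapsTo U s t) {x y z : α} (hx : x ∈ s) (hy : y ∈ s) (hz : z ∈ s) (hxy : x < y)
    (hyz : y < z) : f (U y) < max (f (U x)) (f (U z)) := by
  have hxz := hU hx hz (hxy.trans hyz)
  refine hf.lt_on_openSegment (hUt hx) (hUt hz) hxz.ne ?_
  rw [openSegment_eq_Ioo hxz]
  exact ⟨hU hx hy hxy, hU hy hz hyz⟩

section MinimumSplit

variable {α β : Type*} [LinearOrder α] [DenselyOrdered α] [LinearOrder β] {G : α → β}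
  {s : Set α} {p : α}

lemma strictAntiOn_of_isMinOn_of_lt_max (hs : s.OrdConnected)
    (hG : ∀ x ∈ s, ∀ y ∈ s, ∀ z ∈ s, x < y → y < z → G y < max (G x) (G z))
    (hp : p ∈ s) (hmin : IsMinOn G s p) : StrictAntiOn G {x ∈ s | x ≤ p} := by
  rw [isMinOn_iff] at hmin
  have hlt : ∀ x ∈ s, x < p → G p < G x := by
    intro x hx hxp
    obtain ⟨z, hxz, hzp⟩ := exists_between hxp
    have hz : z ∈ s := hs.out hx hp ⟨hxz.le, hzp.le⟩
    exact (hmin z hz).trans_lt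
      ((lt_max_iff.1 (hG x hx z hz p hp hxz hzp)).resolve_right (hmin z hz).not_gt)
  intro x hx y hy hxy
  rcases hy.2.lt_or_eq with hyp | rfl
  · have h := hG x hx.1 y hy.1 p hp hxy hyp
    rwa [max_eq_left (hlt x hx.1 (hxy.trans hyp)).le] at h
  · exact hlt x hx.1 hxy

lemma strictMonoOn_of_isMinOn_of_lt_max (hs : s.OrdConnected)
    (hG : ∀ x ∈ s, ∀ y ∈ s, ∀ z ∈ s, x < y → y < z → G y < max (G x) (G z))
    (hp : p ∈ s) (hmin : IsMinOn G s p) : StrictMonoOn G {x ∈ s | p ≤ x} := by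
  have h := strictAntiOn_of_isMinOn_of_lt_max (α := αᵒᵈ) (G := G ∘ OrderDual.ofDual)
    (p := OrderDual.toDual p) hs.dual
    (fun x hx y hy z hz hxy hyz => (hG z hz y hy x hx hyz hxy).trans_eq (max_comm _ _)) hp hmin
  exact fun x hx y hy hxy => h hy hx hxy

end MinimumSplit

lemma exists_strictAntiOn_strictMonoOn_of_lt_max {G : ℝ → ℝ} {a b : ℝ} (hab : a ≤ b)
    (hcont : ContinuousOn G (Set.Icc a b))
    (hG : ∀ x ∈ Set.Icc a b, ∀ y ∈ Set.Icc a b, ∀ z ∈ Set.Icc a b,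
      x < y → y < z → G y < max (G x) (G z)) :
    ∃ p ∈ Set.Icc a b, StrictAntiOn G (Set.Icc a p) ∧ StrictMonoOn G (Set.Icc p b) := by
  obtain ⟨p, hp, hmin⟩ := isCompact_Icc.exists_isMinOn (Set.nonempty_Icc.2 hab) hcont
  refine ⟨p, hp, (strictAntiOn_of_isMinOn_of_lt_max Set.ordConnected_Icc hG hp hmin).mono ?_,
    (strictMonoOn_of_isMinOn_of_lt_max Set.ordConnected_Icc hG hp hmin).mono ?_⟩
  · exact fun x hx => ⟨⟨hx.1, hx.2.trans hp.2⟩, hx.2⟩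
  · exact fun x hx => ⟨⟨hp.1.trans hx.1, hx.2⟩, hx.1⟩

lemma natCast_mul_mul_one_sub_pow_lt_one (k : ℕ) {t : ℝ} (ht0 : 0 ≤ t) (ht1 : t < 1) :
    k * t * (1 - t) ^ (k - 1) < 1 := by
  rcases k with _ | n
  · simp
  have hbern : (1 - t) ^ n * (1 + n * t) ≤ 1 :=
    calc (1 - t) ^ n * (1 + n * t) ≤ (1 - t) ^ n * (1 + t) ^ n :=
        mul_le_mul_of_nonneg_left (one_add_mul_le_pow (by linarith) n) (pow_nonneg (by linarith) n)
      _ = (1 - t ^ 2) ^ n := by rw [← mul_pow]; ring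
      _ ≤ 1 := pow_le_one₀ (by nlinarith) (by nlinarith)
  have hpow : 0 < (1 - t) ^ n := pow_pos (by linarith) n
  push_cast
  nlinarith

lemma one_sub_one_sub_pow_mem_Ico (k : ℕ) {τ : ℝ} (hτ : τ ∈ Set.Ioo 0 1) :
    1 - (1 - τ) ^ k ∈ Set.Ico 0 1 :=
  ⟨sub_nonneg.2 (pow_le_one₀ (by linarith [hτ.2]) (by linarith [hτ.1])),
    sub_lt_self 1 (pow_pos (by linarith [hτ.2]) k)⟩

lemma hasDerivAt_one_sub_one_sub_pow (k : ℕ) (τ : ℝ) :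
    HasDerivAt (fun τ : ℝ => 1 - (1 - τ) ^ k) (k * (1 - τ) ^ (k - 1)) τ := by
  simpa using (((hasDerivAt_id' τ).const_sub 1).fun_pow k).const_sub 1

lemma strictMonoOn_mul_comp_one_sub_one_sub_pow {g : ℝ → ℝ} (hg : Differentiable ℝ g)
    (hpos : ∀ c ∈ Set.Icc 0 1, 0 < g c) (hderiv : ∀ c ∈ Set.Icc 0 1, 0 ≤ g c + deriv g c)
    (k : ℕ) : StrictMonoOn (fun τ => τ * g (1 - (1 - τ) ^ k)) (Set.Icc 0 1) := by
  have hφ : ∀ τ, HasDerivAt (fun τ => τ * g (1 - (1 - τ) ^ k))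
      (g (1 - (1 - τ) ^ k) + τ * (k * (1 - τ) ^ (k - 1)) * deriv g (1 - (1 - τ) ^ k)) τ :=
    fun τ => ((hasDerivAt_id' τ).fun_mul
      ((hg _).hasDerivAt.comp τ (hasDerivAt_one_sub_one_sub_pow k τ))).congr_deriv
        (by simp only [Function.comp_apply]; ring)
  refine strictMonoOn_of_deriv_pos (convex_Icc 0 1)
    (fun τ _ => (hφ τ).continuousAt.continuousWithinAt) fun τ hτ => ?_
  rw [interior_Icc] at hτ
  set c := 1 - (1 - τ) ^ k
  have hc : c ∈ Set.Icc 0 1 := Set.Ico_subset_Icc_self (one_sub_one_sub_pow_mem_Ico k hτ)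
  set lam := τ * (k * (1 - τ) ^ (k - 1))
  have hlam0 : 0 ≤ lam := mul_nonneg hτ.1.le (by have := hτ.2; positivity)
  have hlam1 : lam < 1 := by
    simpa only [lam, mul_assoc, mul_left_comm] using
      natCast_mul_mul_one_sub_pow_lt_one k hτ.1.le hτ.2
  -- `g + λ g' = (1 - λ) g + λ (g + g')`
  rw [(hφ τ).deriv]
  nlinarith [hpos c hc, hderiv c hc]

section ImplicitSolution

variable {α : Type*} {s : Set α} {I : Set ℝ} {F : α → ℝ → ℝ} {T : α → ℝ} {κ : ℝ}

lemma strictMonoOn_of_forall_apply_eq [Preorder α] (hmono : ∀ q ∈ s, StrictMonoOn (F q) I)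
    (hanti : ∀ t ∈ I, StrictAntiOn (fun q => F q t) s) (hT : ∀ q ∈ s, T q ∈ I ∧ F q (T q) = κ) :
    StrictMonoOn T s := by
  intro x hx y hy hxy
  by_contra! hle
  have h : F y (T y) < F x (T x) := ((hmono y hy).monotoneOn (hT y hy).1 (hT x hx).1 hle).trans_lt
    (hanti (T x) (hT x hx).1 hx hy hxy)
  rw [(hT x hx).2, (hT y hy).2] at h
  exact lt_irrefl κ h

lemma continuousOn_of_forall_apply_eq [TopologicalSpace α] (hI : IsOpen I)
    (hmono : ∀ q ∈ s, StrictMonoOn (F q) I) (hcont : ∀ t ∈ I, ContinuousOn (fun q => F q t) s)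
    (hT : ∀ q ∈ s, T q ∈ I ∧ F q (T q) = κ) : ContinuousOn T s := by
  intro q₀ hq₀
  obtain ⟨hTI, hTκ⟩ := hT q₀ hq₀
  have hInhds : I ∈ nhds (T q₀) := hI.mem_nhds hTI
  refine tendsto_order.2 ⟨fun a ha => ?_, fun b hb => ?_⟩
  · have hleft : ∀ᶠ x in nhdsWithin (T q₀) (Set.Iio (T q₀)), x ∈ I ∧ a < x ∧ x < T q₀ :=
      Filter.Eventually.and (mem_nhdsWithin_of_mem_nhds hInhds) <|
        Filter.Eventually.and (mem_nhdsWithin_of_mem_nhds (Ioi_mem_nhds ha)) self_mem_nhdsWithin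
    obtain ⟨a', ha'I, haa', ha'T⟩ := hleft.exists
    have hFa' : F q₀ a' < κ := hTκ ▸ hmono q₀ hq₀ ha'I hTI ha'T
    filter_upwards [(hcont a' ha'I q₀ hq₀).eventually_lt_const hFa', self_mem_nhdsWithin]
      with q hFq hq
    rw [← (hT q hq).2] at hFq
    exact haa'.trans (((hmono q hq).lt_iff_lt ha'I (hT q hq).1).1 hFq)
  · have hright : ∀ᶠ x in nhdsWithin (T q₀) (Set.Ioi (T q₀)), x ∈ I ∧ x < b ∧ T q₀ < x :=
      Filter.Eventually.and (mem_nhdsWithin_of_mem_nhds hInhds) <|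
        Filter.Eventually.and (mem_nhdsWithin_of_mem_nhds (Iio_mem_nhds hb)) self_mem_nhdsWithin
    obtain ⟨b', hb'I, hb'b, hTb'⟩ := hright.exists
    have hFb' : κ < F q₀ b' := hTκ ▸ hmono q₀ hq₀ hTI hb'I hTb'
    filter_upwards [(hcont b' hb'I q₀ hq₀).eventually_const_lt hFb', self_mem_nhdsWithin]
      with q hFq hq
    rw [← (hT q hq).2] at hFq
    exact (((hmono q hq).lt_iff_lt (hT q hq).1 hb'I).1 hFq).trans hb'b

end ImplicitSolution

section Alpha

variable {m i : ℕ} {c : ℝ}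

lemma alphaB_self (m : ℕ) (c : ℝ) : alphaB m m c = 2 ^ m * (2 - c) := by
  simp only [alphaB, Finset.Icc_self, Finset.sum_singleton, tsub_self, pow_zero, mul_one]
  ring

lemma alphaB_eq_of_lt (hi : i < m) (c : ℝ) :
    alphaB m i c = 2 ^ i * (1 - c) + c * alphaB m (i + 1) c := by
  have hIcc : Finset.Icc i m = insert i (Finset.Icc (i + 1) m) := by
    rw [Finset.Icc_add_one_left_eq_Ioc, Finset.Ioc_insert_left hi.le]
  have hshift : ∀ k ∈ Finset.Icc (i + 1) m,
      (2 : ℝ) ^ k * c ^ (k - i) = c * ((2 : ℝ) ^ k * c ^ (k - (i + 1))) := by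
    intro k hk
    rw [show k - i = k - (i + 1) + 1 by have := (Finset.mem_Icc.1 hk).1; omega, pow_succ]
    ring
  unfold alphaB
  rw [hIcc, Finset.sum_insert (by simp), Finset.sum_congr rfl hshift, ← Finset.mul_sum,
    show m - i = m - (i + 1) + 1 by omega, pow_succ, Nat.sub_self, pow_zero]
  ring

lemma differentiable_alphaB (m i : ℕ) : Differentiable ℝ (alphaB m i) := by
  unfold alphaB
  fun_prop

lemma deriv_alphaB_self (m : ℕ) (c : ℝ) : deriv (alphaB m m) c = -2 ^ m := by
  have : HasDerivAt (fun x : ℝ => 2 ^ m * (2 - x)) (2 ^ m * (0 - 1)) c :=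
    ((hasDerivAt_const c 2).sub (hasDerivAt_id c)).const_mul _
  rw [funext (alphaB_self m), this.deriv]
  ring

lemma deriv_alphaB_of_lt (hi : i < m) (c : ℝ) :
    deriv (alphaB m i) c = -2 ^ i + alphaB m (i + 1) c + c * deriv (alphaB m (i + 1)) c := by
  have : HasDerivAt (fun x : ℝ => 2 ^ i * (1 - x) + x * alphaB m (i + 1) x)
      (2 ^ i * (0 - 1) + (1 * alphaB m (i + 1) c + c * deriv (alphaB m (i + 1)) c)) c :=
    (((hasDerivAt_const c 1).sub (hasDerivAt_id c)).const_mul _).add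
      ((hasDerivAt_id c).mul (differentiable_alphaB m (i + 1) c).hasDerivAt)
  rw [funext (alphaB_eq_of_lt hi), this.deriv]
  ring

lemma two_pow_le_alphaB (hi : i ≤ m) (hc : c ∈ Set.Icc 0 1) : 2 ^ i ≤ alphaB m i c := by
  induction hi using Nat.decreasingInduction with
  | self =>
    rw [alphaB_self]
    nlinarith [hc.2, (by positivity : (0 : ℝ) < 2 ^ m)]
  | of_succ k hk ih =>
    rw [alphaB_eq_of_lt hk, pow_succ] at *
    nlinarith [hc.1, (by positivity : (0 : ℝ) < 2 ^ k)]

lemma alphaB_add_deriv_nonneg (hi : i ≤ m) (hc : c ∈ Set.Icc 0 1) :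
    0 ≤ alphaB m i c + deriv (alphaB m i) c := by
  induction hi using Nat.decreasingInduction with
  | self =>
    rw [alphaB_self, deriv_alphaB_self]
    nlinarith [hc.2, (by positivity : (0 : ℝ) < 2 ^ m)]
  | of_succ k hk ih =>
    have h2k : (2 : ℝ) ^ (k + 1) ≤ alphaB m (k + 1) c := two_pow_le_alphaB hk hc
    rw [alphaB_eq_of_lt hk, deriv_alphaB_of_lt hk, pow_succ] at *
    nlinarith [mul_nonneg hc.1 ih, hc.2, (by positivity : (0 : ℝ) < 2 ^ k)]

lemma alphaB_lt_alphaB_succ (hi : i < m) (hc : c ∈ Set.Ico 0 1) :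
    alphaB m i c < alphaB m (i + 1) c := by
  have h2i : (2 : ℝ) ^ (i + 1) ≤ alphaB m (i + 1) c := two_pow_le_alphaB hi ⟨hc.1, hc.2.le⟩
  rw [alphaB_eq_of_lt hi, pow_succ] at *
  have h2i_pos : (0 : ℝ) < 2 ^ i := by positivity
  nlinarith [mul_pos (sub_pos.2 hc.2) (show 0 < alphaB m (i + 1) c - 2 ^ i by linarith)]

lemma alphaB_lt_alphaB {k : ℕ} (hik : i < k) (hk : k ≤ m) (hc : c ∈ Set.Ico 0 1) :
    alphaB m i c < alphaB m k c := by
  induction k, hik using Nat.le_induction with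
  | base => exact alphaB_lt_alphaB_succ hk hc
  | succ k hik ih => exact (ih (by omega)).trans (alphaB_lt_alphaB_succ hk hc)

end Alpha

noncomputable def rrDenom (m j : ℕ) (p0 c : ℝ) : ℝ :=
  p0 * alphaB m j c + ((1 - p0) / ((m : ℝ) - (j : ℝ))) * ∑ i ∈ Finset.Icc (j + 1) m, alphaB m i c

lemma tauRRC_eq_div_rrDenom (m CWmin j : ℕ) (p0 c : ℝ) :
    tauRRC m CWmin j p0 c = kappa0 CWmin / rrDenom m j p0 c := rfl

section RRDenom

variable {m j : ℕ} {p0 c : ℝ}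

lemma rrDenom_eq_add_mul_mean (m j : ℕ) (p0 c : ℝ) :
    rrDenom m j p0 c = p0 * alphaB m j c
      + (1 - p0) * ((∑ i ∈ Finset.Icc (j + 1) m, alphaB m i c) / ((m : ℝ) - j)) := by
  unfold rrDenom
  ring

lemma alphaB_lt_mean (hj : j < m) (hc : c ∈ Set.Ico 0 1) :
    alphaB m j c < (∑ i ∈ Finset.Icc (j + 1) m, alphaB m i c) / ((m : ℝ) - j) := by
  have hcard : ∑ _i ∈ Finset.Icc (j + 1) m, alphaB m j c = ((m : ℝ) - j) * alphaB m j c := by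
    rw [Finset.sum_const, Nat.card_Icc, nsmul_eq_mul, show m + 1 - (j + 1) = m - j by omega,
      Nat.cast_sub hj.le]
  rw [lt_div_iff₀ (sub_pos.2 (Nat.cast_lt.2 hj)), mul_comm, ← hcard]
  refine Finset.sum_lt_sum_of_nonempty (Finset.nonempty_Icc.2 (by omega)) fun i hi => ?_
  exact alphaB_lt_alphaB (Finset.mem_Icc.1 hi).1 (Finset.mem_Icc.1 hi).2 hc

lemma rrDenom_pos (hj : j < m) (hp0 : p0 ∈ Set.Icc 0 1) (hc : c ∈ Set.Icc 0 1) :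
    0 < rrDenom m j p0 c := by
  have hα : ∀ i ≤ m, 0 < alphaB m i c := fun i hi =>
    (pow_pos two_pos i).trans_le (two_pow_le_alphaB hi hc)
  have hmean : 0 < (∑ i ∈ Finset.Icc (j + 1) m, alphaB m i c) / ((m : ℝ) - j) :=
    div_pos (Finset.sum_pos (fun i hi => hα i (Finset.mem_Icc.1 hi).2)
      (Finset.nonempty_Icc.2 (by omega))) (sub_pos.2 (Nat.cast_lt.2 hj))
  rw [rrDenom_eq_add_mul_mean]
  exact convex_Ioi (0 : ℝ) (hα j hj.le) hmean hp0.1 (sub_nonneg.2 hp0.2) (add_sub_cancel _ _)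

lemma rrDenom_strictAnti (hj : j < m) (hc : c ∈ Set.Ico 0 1) :
    StrictAnti fun p0 => rrDenom m j p0 c := by
  intro x y hxy
  simp only [rrDenom_eq_add_mul_mean]
  nlinarith [alphaB_lt_mean hj hc]

lemma differentiable_rrDenom (m j : ℕ) (p0 : ℝ) : Differentiable ℝ (rrDenom m j p0) := by
  unfold rrDenom alphaB
  fun_prop

lemma rrDenom_add_deriv_nonneg (hj : j < m) (hp0 : p0 ∈ Set.Icc 0 1) (hc : c ∈ Set.Icc 0 1) :
    0 ≤ rrDenom m j p0 c + deriv (rrDenom m j p0) c := by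
  set w : ℝ := (1 - p0) / ((m : ℝ) - j)
  have hderiv : HasDerivAt (rrDenom m j p0) (p0 * deriv (alphaB m j) c
      + w * ∑ i ∈ Finset.Icc (j + 1) m, deriv (alphaB m i) c) c :=
    ((differentiable_alphaB m j c).hasDerivAt.const_mul p0).add
      ((HasDerivAt.fun_sum fun i _ => (differentiable_alphaB m i c).hasDerivAt).const_mul w)
  have hsplit : rrDenom m j p0 c + deriv (rrDenom m j p0) c
      = p0 * (alphaB m j c + deriv (alphaB m j) c)
        + w * ∑ i ∈ Finset.Icc (j + 1) m, (alphaB m i c + deriv (alphaB m i) c) := by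
    rw [hderiv.deriv, Finset.sum_add_distrib]
    unfold rrDenom
    ring
  rw [hsplit]
  exact add_nonneg (mul_nonneg hp0.1 (alphaB_add_deriv_nonneg hj.le hc))
    (mul_nonneg (div_nonneg (sub_nonneg.2 hp0.2) (sub_pos.2 (Nat.cast_lt.2 hj)).le)
      (Finset.sum_nonneg fun i hi => alphaB_add_deriv_nonneg (Finset.mem_Icc.1 hi).2 hc))

end RRDenom

lemma IsFixedPointRR.mul_rrDenom_eq {m CWmin N j : ℕ} {p0 τ : ℝ}
    (h : IsFixedPointRR m CWmin N j p0 τ) (hτ : τ ≠ 0) :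
    τ * rrDenom m j p0 (1 - (1 - τ) ^ (N - 1)) = kappa0 CWmin := by
  have hfix := h.2
  rw [tauRRC_eq_div_rrDenom] at hfix
  have hD : rrDenom m j p0 (1 - (1 - τ) ^ (N - 1)) ≠ 0 := by
    intro hD
    rw [hD, div_zero] at hfix
    exact hτ hfix
  rwa [eq_div_iff hD] at hfix

noncomputable def throughputCost (N : ℕ) (σ Tc u : ℝ) : ℝ :=
  Tc / N * ∑ i ∈ Finset.range N, u ^ i + σ / N * (u - 1)⁻¹

section Throughput

variable {N : ℕ} {σ Tc : ℝ}

lemma Ssys1_eq_div (hN : N ≠ 0) (EP Ts : ℝ) {p : ℝ} (hp : p ∈ Set.Ioo 0 1) :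
    Ssys1 N EP σ Ts Tc p = EP / (Ts - Tc + throughputCost N σ Tc (1 - p)⁻¹) := by
  obtain ⟨hp0, hp1⟩ := hp
  have hu1 : (1 - p)⁻¹ ≠ 1 := by
    rw [Ne, inv_eq_one]
    linarith
  have hu : (1 - p)⁻¹ - 1 = p / (1 - p) := by field_simp; ring
  have hNq : (N : ℝ) * p / (1 - p) * (1 - p) ^ N ≠ 0 := by
    have : (0 : ℝ) < N := by exact_mod_cast Nat.pos_of_ne_zero hN
    have : 0 < 1 - p := by linarith
    positivity
  have hden : (1 - p) ^ N * σ + N * p / (1 - p) * (1 - p) ^ N * (Ts - Tc) + (1 - (1 - p) ^ N) * Tc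
      = N * p / (1 - p) * (1 - p) ^ N * (Ts - Tc + throughputCost N σ Tc (1 - p)⁻¹) := by
    rw [throughputCost, geom_sum_eq hu1, hu, inv_pow]
    field_simp
    ring
  rw [Ssys1, hden, mul_assoc EP, mul_comm EP, mul_div_mul_left _ _ hNq]

lemma throughputCost_strictConvexOn (hN : N ≠ 0) (hσ : 0 < σ) (hTc : 0 ≤ Tc) :
    StrictConvexOn ℝ (Set.Ioi 1) (throughputCost N σ Tc) := by
  have hNpos : (0 : ℝ) < N := by exact_mod_cast Nat.pos_of_ne_zero hN
  exact (((convexOn_sum_range_pow N).subset (Set.Ioi_subset_Ici zero_le_one) (convex_Ioi 1)).smul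
    (div_nonneg hTc hNpos.le)).add_strictConvexOn
    (strictConvexOn_inv_sub_one.const_mul (div_pos hσ hNpos))

lemma throughputCost_pos (hN : N ≠ 0) (hσ : 0 < σ) (hTc : 0 ≤ Tc) {u : ℝ} (hu : 1 < u) :
    0 < throughputCost N σ Tc u := by
  have hNpos : (0 : ℝ) < N := by exact_mod_cast Nat.pos_of_ne_zero hN
  have hu0 : 0 < u - 1 := sub_pos.2 hu
  unfold throughputCost
  have : 0 ≤ ∑ i ∈ Finset.range N, u ^ i :=
    Finset.sum_nonneg fun i _ => pow_nonneg (by linarith) i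
  positivity

lemma continuousOn_throughputCost : ContinuousOn (throughputCost N σ Tc) (Set.Ioi 1) := by
  unfold throughputCost
  exact ContinuousOn.add (by fun_prop) (continuousOn_const.mul
    ((continuous_sub_right 1).continuousOn.inv₀ fun u hu => sub_ne_zero.2 (ne_of_gt hu)))

end Throughput

lemma exists_strictMonoOn_strictAntiOn_Ssys1_comp {N : ℕ} (hN : N ≠ 0) {EP σ Ts Tc : ℝ}
    (hEP : 0 < EP) (hσ : 0 < σ) (hTc : 0 ≤ Tc) (hTs : Tc ≤ Ts) {T : ℝ → ℝ}
    (hTmem : ∀ p0 ∈ Set.Icc 0 1, T p0 ∈ Set.Ioo 0 1) (hTmono : StrictMonoOn T (Set.Icc 0 1))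
    (hTcont : ContinuousOn T (Set.Icc 0 1)) :
    ∃ p0star ∈ Set.Icc (0 : ℝ) 1,
      StrictMonoOn (fun p0 => Ssys1 N EP σ Ts Tc (T p0)) (Set.Icc 0 p0star) ∧
      StrictAntiOn (fun p0 => Ssys1 N EP σ Ts Tc (T p0)) (Set.Icc p0star 1) := by
  set U : ℝ → ℝ := fun p0 => (1 - T p0)⁻¹
  have hU : Set.MapsTo U (Set.Icc 0 1) (Set.Ioi 1) := fun p0 hp0 => show 1 < (1 - T p0)⁻¹ from
    (one_lt_inv₀ (by linarith [(hTmem p0 hp0).2])).2 (by linarith [(hTmem p0 hp0).1])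
  have hUmono : StrictMonoOn U (Set.Icc 0 1) := fun x hx y hy hxy =>
    inv_strictAnti₀ (by linarith [(hTmem y hy).2]) (by linarith [hTmono hx hy hxy])
  have hUcont : ContinuousOn U (Set.Icc 0 1) :=
    (continuousOn_const.sub hTcont).inv₀ fun p0 hp0 => (sub_pos.2 (hTmem p0 hp0).2).ne'
  obtain ⟨p, hp, hanti, hmono⟩ := exists_strictAntiOn_strictMonoOn_of_lt_max zero_le_one
    (continuousOn_throughputCost.comp hUcont hU) fun x hx y hy z hz =>
      (throughputCost_strictConvexOn hN hσ hTc).lt_max_of_strictMonoOn hUmono hU hx hy hz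
  have hS : ∀ p0 ∈ Set.Icc (0 : ℝ) 1, Ssys1 N EP σ Ts Tc (T p0)
      = EP / (Ts - Tc + throughputCost N σ Tc (U p0)) := fun p0 hp0 =>
    Ssys1_eq_div hN EP Ts (hTmem p0 hp0)
  have hpos : ∀ p0 ∈ Set.Icc (0 : ℝ) 1, 0 < Ts - Tc + throughputCost N σ Tc (U p0) :=
    fun p0 hp0 =>
      add_pos_of_nonneg_of_pos (sub_nonneg.2 hTs) (throughputCost_pos hN hσ hTc (hU hp0))
  refine ⟨p, hp, fun x hx y hy hxy => ?_, fun x hx y hy hxy => ?_⟩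
  · have hx' : x ∈ Set.Icc (0 : ℝ) 1 := ⟨hx.1, hx.2.trans hp.2⟩
    have hy' : y ∈ Set.Icc (0 : ℝ) 1 := ⟨hy.1, hy.2.trans hp.2⟩
    simp only [hS x hx', hS y hy']
    exact div_lt_div_of_pos_left hEP (hpos y hy') ((add_lt_add_iff_left _).2 (hanti hx hy hxy))
  · have hx' : x ∈ Set.Icc (0 : ℝ) 1 := ⟨hp.1.trans hx.1, hx.2⟩
    have hy' : y ∈ Set.Icc (0 : ℝ) 1 := ⟨hp.1.trans hy.1, hy.2⟩
    simp only [hS x hx', hS y hy']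
    exact div_lt_div_of_pos_left hEP (hpos x hx') ((add_lt_add_iff_left _).2 (hmono hx hy hxy))

theorem RR_throughput_quasiconcave_general (m CWmin N : ℕ)
    (hN : 2 ≤ N) (EP σ Ts Tc : ℝ)
    (hEP : 0 < EP) (hσ : 0 < σ) (hTc : σ ≤ Tc) (hTs : Tc ≤ Ts)
    (j : ℕ) (hj : j < m) (T : ℝ → ℝ)
    (hT : ∀ p0 ∈ Set.Icc (0 : ℝ) 1,
      T p0 ∈ Set.Ioo (0 : ℝ) 1 ∧ IsFixedPointRR m CWmin N j p0 (T p0)) :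
    ∃ p0star ∈ Set.Icc (0 : ℝ) 1,
      StrictMonoOn (fun p0 => Ssys1 N EP σ Ts Tc (T p0)) (Set.Icc 0 p0star) ∧
      StrictAntiOn (fun p0 => Ssys1 N EP σ Ts Tc (T p0)) (Set.Icc p0star 1) := by
  set F : ℝ → ℝ → ℝ := fun p0 τ => τ * rrDenom m j p0 (1 - (1 - τ) ^ (N - 1))
  have hsolves : ∀ p0 ∈ Set.Icc (0 : ℝ) 1, T p0 ∈ Set.Ioo 0 1 ∧ F p0 (T p0) = kappa0 CWmin :=
    fun p0 hp0 => ⟨(hT p0 hp0).1, (hT p0 hp0).2.mul_rrDenom_eq (hT p0 hp0).1.1.ne'⟩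
  have hFmono : ∀ p0 ∈ Set.Icc (0 : ℝ) 1, StrictMonoOn (F p0) (Set.Ioo 0 1) := fun p0 hp0 =>
    (strictMonoOn_mul_comp_one_sub_one_sub_pow (differentiable_rrDenom m j p0)
      (fun _ hc => rrDenom_pos hj hp0 hc) (fun _ hc => rrDenom_add_deriv_nonneg hj hp0 hc)
      (N - 1)).mono Set.Ioo_subset_Icc_self
  have hFanti : ∀ τ ∈ Set.Ioo (0 : ℝ) 1, StrictAntiOn (fun p0 => F p0 τ) (Set.Icc 0 1) :=
    fun τ hτ => ((rrDenom_strictAnti hj (one_sub_one_sub_pow_mem_Ico (N - 1) hτ)).const_mul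
      hτ.1).strictAntiOn _
  have hFcont : ∀ τ ∈ Set.Ioo (0 : ℝ) 1, ContinuousOn (fun p0 => F p0 τ) (Set.Icc 0 1) := by
    intro τ _
    simp only [F, rrDenom]
    fun_prop
  exact exists_strictMonoOn_strictAntiOn_Ssys1_comp (by omega) hEP hσ (hσ.le.trans hTc) hTs
    (fun p0 hp0 => (hT p0 hp0).1) (strictMonoOn_of_forall_apply_eq hFmono hFanti hsolves)
    (continuousOn_of_forall_apply_eq isOpen_Ioo hFmono hFcont hsolves)

/-- With unit weights and a fixed `j ∈ {0,…,m-1}`, assuming the fixed-point attempt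
probability `τ(j;p₀)` lies in `(0,1)` for all `p₀ ∈ [0,1]`, the RandomReset throughput
`S̃(j,p₀) = S(τ(j;p₀), 1)` is strictly quasi-concave in `p₀` on `[0,1]`: it is strictly
increasing up to some `p₀*` and strictly decreasing afterwards. -/
theorem RR_throughput_quasiconcave (m CWmin N : ℕ) (hm : 1 ≤ m) (hCW : 2 ≤ CWmin)
    (hN : 2 ≤ N) (EP σ Ts Tc : ℝ)
    (hEP : 0 < EP) (hσ : 0 < σ) (hTc : σ ≤ Tc) (hTs : Tc ≤ Ts)
    (j : ℕ) (hj : j < m) (T : ℝ → ℝ)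
    (hT : ∀ p0 ∈ Set.Icc (0 : ℝ) 1,
      T p0 ∈ Set.Ioo (0 : ℝ) 1 ∧ IsFixedPointRR m CWmin N j p0 (T p0)) :
    ∃ p0star ∈ Set.Icc (0 : ℝ) 1,
      StrictMonoOn (fun p0 => Ssys1 N EP σ Ts Tc (T p0)) (Set.Icc 0 p0star) ∧
      StrictAntiOn (fun p0 => Ssys1 N EP σ Ts Tc (T p0)) (Set.Icc p0star 1) :=
  RR_throughput_quasiconcave_general m CWmin N hN EP σ Ts Tc hEP hσ hTc hTs j hj T hT
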